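/- Let R be a Hermitian positive semidefinite K×K complex matrix with orthonormal eigenvectors u₁, …, u_K and eigenvalues λ₁ ≥ λ₂ ≥ ⋯ ≥ λ_K ≥ 0, with λ₁ > 1. Let v(0) ∈ ℂ^K with u₁ᴴ v(0) ≠ 0, and define v(M) = R^M v(0) + ∑_{j=1}^{M} R^{M−j} d(j) for error vectors d(j) ∈ ℂ^K. Write d(j) = ∑_i a_{j,i} u_i and v(0) = ∑_i a_{0,i} u_i. If max_{2 ≤ i ≤ K} max_{0 ≤ j ≤ M} |a_{j,i}| = o( (1/(M+1)) · (λ₁ / max{λ₂, 1})^M ) as M → ∞, and the denominator sequence |∑_{j=0}^M a_{j,1} λ₁^{−j}|² stays bounded away from zero, then sin θ(M) → 0 as M → ∞, where cos θ(M) = |u₁ᴴ v(M)| / ‖v(M)‖. -/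

import Mathlib

/-!
In the eigenbasis, `v M = ∑ i, b M i • u i` with `b M i = ∑_{j ≤ M} λᵢ ^ (M - j) * a j i`.
The dominant coefficient factors as `λ₁ ^ M * ∑_{j ≤ M} a j 1 * λ₁⁻¹ ^ j`, so it is at least
`√c * λ₁ ^ M`, while every other coefficient is at most `(M + 1) * max(λ₂, 1) ^ M * γ M`.
Since `sin θ` is at most the norm of the non-dominant coefficients divided by the dominant one,
the little-o hypothesis on `γ` drives it to zero.
-/

open Matrix Filter Finset

section Orthonormal

variable {n ι : Type*} [Fintype n] [Fintype ι] [DecidableEq ι] {u : ι → n → ℂ}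

lemma star_dotProduct_sum_smul (horth : ∀ i j, star (u i) ⬝ᵥ u j = if i = j then 1 else 0)
    (b : ι → ℂ) (k : ι) : star (u k) ⬝ᵥ ∑ i, b i • u i = b k := by
  simp [dotProduct_sum, horth]

lemma star_dotProduct_self_eq_sum_norm_sq (x : n → ℂ) :
    star x ⬝ᵥ x = ((∑ k, ‖x k‖ ^ 2 : ℝ) : ℂ) := by
  simp [dotProduct, Complex.conj_mul']

lemma sum_norm_sq_sum_smul (horth : ∀ i j, star (u i) ⬝ᵥ u j = if i = j then 1 else 0)
    (b : ι → ℂ) : ∑ k, ‖(∑ i, b i • u i) k‖ ^ 2 = ∑ i, ‖b i‖ ^ 2 := by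
  have h := star_dotProduct_self_eq_sum_norm_sq (∑ i, b i • u i)
  rw [star_sum, sum_dotProduct] at h
  simp only [star_smul, smul_dotProduct, star_dotProduct_sum_smul horth, smul_eq_mul,
    Complex.star_def, Complex.conj_mul'] at h
  exact_mod_cast h.symm

end Orthonormal

section Eigen

variable {n ι α : Type*} [Fintype n] [DecidableEq n] [Fintype ι] [CommSemiring α]
  {R : Matrix n n α} {u : ι → n → α} {lam : ι → α}

lemma pow_mulVec_sum_smul (heig : ∀ i, R *ᵥ u i = lam i • u i) (m : ℕ) (f : ι → α) :
    (R ^ m) *ᵥ ∑ i, f i • u i = ∑ i, (lam i ^ m * f i) • u i := by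
  have hpow : ∀ i, (R ^ m) *ᵥ u i = lam i ^ m • u i := by
    intro i
    induction m with
    | zero => simp
    | succ m ih => rw [pow_succ, ← mulVec_mulVec, heig, mulVec_smul, ih, smul_smul, ← pow_succ']
  simp only [mulVec_sum, mulVec_smul, hpow, smul_smul, mul_comm]

lemma pow_mulVec_add_sum_pow_sub_mulVec (heig : ∀ i, R *ᵥ u i = lam i • u i)
    (a : ℕ → ι → α) (M : ℕ) :
    (R ^ M) *ᵥ (∑ i, a 0 i • u i) + ∑ j ∈ Icc 1 M, (R ^ (M - j)) *ᵥ (∑ i, a j i • u i)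
      = ∑ i, (∑ j ∈ range (M + 1), lam i ^ (M - j) * a j i) • u i := by
  simp only [pow_mulVec_sum_smul heig, sum_smul]
  rw [sum_comm (s := univ), range_eq_Ico, sum_eq_sum_Ico_succ_bot (Nat.succ_pos M), zero_add,
    Nat.succ_eq_add_one, Ico_add_one_right_eq_Icc, Nat.sub_zero]

end Eigen

lemma sum_range_pow_sub_mul_eq {𝕜 : Type*} [Field 𝕜] {x : 𝕜} (hx : x ≠ 0) (a : ℕ → 𝕜)
    (M : ℕ) :
    ∑ j ∈ range (M + 1), x ^ (M - j) * a j = x ^ M * ∑ j ∈ range (M + 1), a j * x⁻¹ ^ j := by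
  rw [mul_sum]
  refine sum_congr rfl fun j hj => ?_
  rw [inv_pow, pow_sub₀ _ hx (Nat.lt_succ_iff.mp (mem_range.mp hj))]
  ring

lemma sqrt_mul_pow_le_norm_sum_range_pow_sub_mul {𝕜 : Type*} [RCLike 𝕜] {x c : ℝ} (hx : 0 < x)
    {a : ℕ → 𝕜} {M : ℕ} (hc : c ≤ ‖∑ j ∈ range (M + 1), a j * (x : 𝕜)⁻¹ ^ j‖ ^ 2) :
    √c * x ^ M ≤ ‖∑ j ∈ range (M + 1), (x : 𝕜) ^ (M - j) * a j‖ := by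
  have hc' := Real.sqrt_le_sqrt hc
  rw [Real.sqrt_sq (norm_nonneg _)] at hc'
  rw [sum_range_pow_sub_mul_eq (RCLike.ofReal_ne_zero.2 hx.ne'), norm_mul, norm_pow,
    RCLike.norm_ofReal, abs_of_pos hx, mul_comm]
  gcongr

lemma norm_sum_range_pow_sub_mul_le {𝕜 : Type*} [NormedField 𝕜] {x : 𝕜} {m γ : ℝ}
    (hxm : ‖x‖ ≤ m) (hm : 1 ≤ m) {a : ℕ → 𝕜} {M : ℕ} (ha : ∀ j ≤ M, ‖a j‖ ≤ γ) :
    ‖∑ j ∈ range (M + 1), x ^ (M - j) * a j‖ ≤ (M + 1) * (m ^ M * γ) := by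
  calc ‖∑ j ∈ range (M + 1), x ^ (M - j) * a j‖
      ≤ ∑ j ∈ range (M + 1), ‖x ^ (M - j) * a j‖ := norm_sum_le _ _
    _ ≤ ∑ j ∈ range (M + 1), m ^ M * γ := by
        refine sum_le_sum fun j hj => ?_
        have hjM := Nat.lt_succ_iff.mp (mem_range.mp hj)
        have hxM : ‖x‖ ^ (M - j) ≤ m ^ M :=
          (pow_le_pow_left₀ (norm_nonneg x) hxm _).trans (pow_le_pow_right₀ hm (Nat.sub_le M j))
        rw [norm_mul, norm_pow]
        exact mul_le_mul hxM (ha j hjM) (norm_nonneg _) (by positivity)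
    _ = (M + 1) * (m ^ M * γ) := by simp

lemma sqrt_one_sub_div_sqrt_sum_sq_le {ι E : Type*} [Fintype ι] [SeminormedAddGroup E]
    (b : ι → E) {i₀ : ι} {L B : ℝ} (hL : 0 < L) (hLb : L ≤ ‖b i₀‖) (hB₀ : 0 ≤ B)
    (hB : ∀ i ≠ i₀, ‖b i‖ ≤ B) :
    √(1 - (‖b i₀‖ / √(∑ i, ‖b i‖ ^ 2)) ^ 2) ≤ √(Fintype.card ι) * B / L := by
  classical
  have hb : 0 < ‖b i₀‖ := hL.trans_le hLb
  set T := ∑ i ∈ univ.erase i₀, ‖b i‖ ^ 2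
  have hT₀ : 0 ≤ T := sum_nonneg fun i _ => sq_nonneg _
  have hS : ∑ i, ‖b i‖ ^ 2 = ‖b i₀‖ ^ 2 + T := (add_sum_erase _ _ (mem_univ i₀)).symm
  have hTB : T ≤ Fintype.card ι * B ^ 2 := by
    calc T ≤ (univ.erase i₀).card • B ^ 2 :=
          sum_le_card_nsmul _ _ _ fun i hi => by gcongr; exact hB i (ne_of_mem_erase hi)
      _ ≤ Fintype.card ι * B ^ 2 := by
          rw [nsmul_eq_mul]
          gcongr
          exact_mod_cast (card_erase_le).trans (card_univ).le
  have hsin : 1 - (‖b i₀‖ / √(∑ i, ‖b i‖ ^ 2)) ^ 2 ≤ T / ‖b i₀‖ ^ 2 := by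
    rw [hS, div_pow, Real.sq_sqrt (by positivity), one_sub_div (by positivity), add_sub_cancel_left]
    exact div_le_div_of_nonneg_left hT₀ (by positivity) (by linarith)
  calc √(1 - (‖b i₀‖ / √(∑ i, ‖b i‖ ^ 2)) ^ 2) ≤ √(T / ‖b i₀‖ ^ 2) := Real.sqrt_le_sqrt hsin
    _ = √T / ‖b i₀‖ := by rw [Real.sqrt_div hT₀, Real.sqrt_sq hb.le]
    _ ≤ √(Fintype.card ι) * B / L := by
        gcongr
        calc √T ≤ √(Fintype.card ι * B ^ 2) := Real.sqrt_le_sqrt hTB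
          _ = √(Fintype.card ι) * B := by rw [Real.sqrt_mul (by positivity), Real.sqrt_sq hB₀]

lemma tendsto_mul_pow_mul_div_pow_of_isLittleO {γ : ℕ → ℝ} {l m : ℝ} (hl : 0 < l) (hm : 0 < m)
    (h : γ =o[atTop] fun M : ℕ => (1 / (M + 1 : ℝ)) * (l / m) ^ M) :
    Tendsto (fun M : ℕ => (M + 1) * (m ^ M * γ M) / l ^ M) atTop (nhds 0) := by
  refine h.tendsto_div_nhds_zero.congr fun M => ?_
  rw [div_pow]
  field_simp

/-- convergence of the decentralized power method under a little-o
condition on the consensus error coefficients. -/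
theorem stmt_4 {K : ℕ} (hK : 2 ≤ K)
    (R : Matrix (Fin K) (Fin K) ℂ)
    (u : Fin K → (Fin K → ℂ)) (lam : Fin K → ℝ)
    (horth : ∀ i j, star (u i) ⬝ᵥ u j = if i = j then 1 else 0)
    (heig : ∀ i, R.mulVec (u i) = (lam i : ℂ) • u i)
    (hsort : Antitone lam)
    (hnn : ∀ i, 0 ≤ lam i)
    (hl1 : 1 < lam ⟨0, by omega⟩)
    (a : ℕ → Fin K → ℂ)
    (v0 : Fin K → ℂ) (hv0 : v0 = ∑ i, a 0 i • u i)
    (d : ℕ → Fin K → ℂ) (hd : ∀ j, 1 ≤ j → d j = ∑ i, a j i • u i)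
    (v : ℕ → Fin K → ℂ)
    (hv : ∀ M, v M = (R ^ M).mulVec v0
          + ∑ j ∈ Finset.Icc 1 M, (R ^ (M - j)).mulVec (d j))
    (γ : ℕ → ℝ)
    (hγ : ∀ M, ∀ i : Fin K, i ≠ ⟨0, by omega⟩ → ∀ j ≤ M, ‖a j i‖ ≤ γ M)
    (hlo : γ =o[atTop] fun M : ℕ =>
        (1 / (M + 1 : ℝ)) * (lam ⟨0, by omega⟩ / max (lam ⟨1, by omega⟩) 1) ^ M)
    (c : ℝ) (hc : 0 < c)
    (hden : ∀ M : ℕ, c ≤ ‖∑ j ∈ Finset.range (M + 1),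
        a j ⟨0, by omega⟩ * ((lam ⟨0, by omega⟩ : ℂ))⁻¹ ^ j‖ ^ 2) :
    Tendsto (fun M => Real.sqrt (1 -
        (‖star (u ⟨0, by omega⟩) ⬝ᵥ v M‖ / Real.sqrt (∑ k, ‖v M k‖ ^ 2)) ^ 2))
      atTop (nhds 0) := by
  set i₀ : Fin K := ⟨0, by omega⟩
  set l := lam i₀
  set m := max (lam ⟨1, by omega⟩) 1
  have hl : 0 < l := by linarith
  have hm : 0 < m := zero_lt_one.trans_le (le_max_right _ _)
  set b : ℕ → Fin K → ℂ := fun M i => ∑ j ∈ range (M + 1), (lam i : ℂ) ^ (M - j) * a j i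
  have hvb : ∀ M, v M = ∑ i, b M i • u i := fun M => by
    rw [hv, hv0, ← pow_mulVec_add_sum_pow_sub_mulVec heig a M]
    exact congrArg _ (sum_congr rfl fun j hj => by rw [hd j (mem_Icc.1 hj).1])
  have hlow : ∀ M, √c * l ^ M ≤ ‖b M i₀‖ := fun M =>
    sqrt_mul_pow_le_norm_sum_range_pow_sub_mul hl (hden M)
  have hup : ∀ M, ∀ i ≠ i₀, ‖b M i‖ ≤ (M + 1) * (m ^ M * γ M) := fun M i hi => by
    have hi₀ : (i : ℕ) ≠ 0 := fun h => hi (Fin.ext h)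
    have hi₁ : (⟨1, by omega⟩ : Fin K) ≤ i := Fin.mk_le_of_le_val (by omega)
    refine norm_sum_range_pow_sub_mul_le ?_ (le_max_right _ _) (hγ M i hi)
    rw [Complex.norm_real, Real.norm_of_nonneg (hnn i)]
    exact (hsort hi₁).trans (le_max_left _ _)
  have hB₀ : ∀ M : ℕ, 0 ≤ (M + 1) * (m ^ M * γ M) := fun M => by
    have hγ₀ : 0 ≤ γ M := (norm_nonneg _).trans (hγ M ⟨1, by omega⟩ (by simp [i₀]) 0 M.zero_le)
    positivity
  have hbound : ∀ M, √(1 - (‖star (u i₀) ⬝ᵥ v M‖ / √(∑ k, ‖v M k‖ ^ 2)) ^ 2)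
      ≤ √K / √c * ((M + 1) * (m ^ M * γ M) / l ^ M) := fun M => by
    rw [hvb, star_dotProduct_sum_smul horth, sum_norm_sq_sum_smul horth]
    calc _ ≤ √(Fintype.card (Fin K)) * ((M + 1) * (m ^ M * γ M)) / (√c * l ^ M) :=
          sqrt_one_sub_div_sqrt_sum_sq_le (b M) (by positivity) (hlow M) (hB₀ M) (hup M)
      _ = _ := by rw [Fintype.card_fin]; ring
  have hlim := (tendsto_mul_pow_mul_div_pow_of_isLittleO hl hm hlo).const_mul (√K / √c)
  rw [mul_zero] at hlim
  exact squeeze_zero (fun _ => Real.sqrt_nonneg _) hbound hlim
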